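/- arXiv:2411.15364 — 7 statements merged into one kernel-verified Lean document; each statement's English description precedes it below -/
import Mathlib

section
/- For every countable indexed collection C = {L_1, L_2, ...} of infinite languages over a countably infinite universe U, there exists a generating algorithm that non-uniformly generates in the limit from C. -/
/-- `x` is an enumeration of the language `K`: every input belongs to `K` and every
element of `K` appears at some finite time. -/
def IsEnumerationOf {U : Type} (K : Set U) (x : ℕ → U) : Prop :=
  (∀ t, x t ∈ K) ∧ ∀ w ∈ K, ∃ t, x t = w

/-- The set `S_t` of distinct strings among the first `t` inputs `x 0, ..., x (t-1)`. -/
def seen {U : Type} (x : ℕ → U) (t : ℕ) : Set U := x '' {i | i < t}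

/-- The input prefix `(x_1, ..., x_t)` as a list, fed to the algorithm. -/
def inputList {U : Type} (x : ℕ → U) (t : ℕ) : List U :=
  List.ofFn (fun i : Fin t => x i)

/-!
Given the finite set `S` of strings seen so far, output a fresh string of the largest
`consistentCore L S m` (the intersection of the languages among `L 0, …, L (m-1)` that
contain `S`) which still has an element outside `S`, with `m ≤ |S|`. For the target
`L i`, the core at level `i + 1` is contained in `L i` and is one of finitely many
intersections `⋂ j ∈ T, L j` with `T ⊆ {0, …, i}`. It contains `S`, so once `|S|`
exceeds the size of every finite such intersection, it is infinite and has fresh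
elements, and the output lies in `L i`.
-/

open Finset

section

open Classical

variable {U : Type} (L : ℕ → Set U)

def consistentCore (S : Set U) (m : ℕ) : Set U :=
  {z | ∀ j < m, S ⊆ L j → z ∈ L j}

/-- Since `Set.ncard` is `0` on infinite sets, only the finite intersections count. -/
noncomputable def coreBound (m : ℕ) : ℕ :=
  (range m).powerset.sup fun T => (⋂ j ∈ T, L j).ncard

variable {L}

theorem subset_consistentCore (S : Set U) (m : ℕ) : S ⊆ consistentCore L S m :=
  fun _ hz _ _ hS => hS hz

theorem consistentCore_subset {S : Set U} {i m : ℕ} (hi : i < m) (hS : S ⊆ L i) :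
    consistentCore L S m ⊆ L i :=
  fun _ hz => hz i hi hS

theorem consistentCore_eq_biInter (S : Set U) (m : ℕ) :
    consistentCore L S m = ⋂ j ∈ (range m).filter (S ⊆ L ·), L j := by
  ext z
  simp [consistentCore]

theorem ncard_consistentCore_le_coreBound (S : Set U) (m : ℕ) :
    (consistentCore L S m).ncard ≤ coreBound L m := by
  rw [consistentCore_eq_biInter]
  exact le_sup (f := fun T => (⋂ j ∈ T, L j).ncard) (mem_powerset.2 (filter_subset _ _))

theorem consistentCore_infinite {S : Set U} {m : ℕ} (h : coreBound L m < S.ncard) :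
    (consistentCore L S m).Infinite := fun hfin =>
  h.not_ge <| (Set.ncard_le_ncard (subset_consistentCore S m) hfin).trans
    (ncard_consistentCore_le_coreBound S m)

theorem consistentCore_zero_diff_nonempty [Infinite U] (S : Finset U) :
    (consistentCore L S 0 \ S).Nonempty := by
  obtain ⟨z, hz⟩ := S.finite_toSet.infinite_compl.nonempty
  exact ⟨z, fun _ hj => absurd hj (Nat.not_lt_zero _), hz⟩

variable (L)

noncomputable def freshLevel (S : Finset U) : ℕ :=
  Nat.findGreatest (fun m => (consistentCore L S m \ S).Nonempty) S.card

theorem freshLevel_spec [Infinite U] (S : Finset U) :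
    (consistentCore L S (freshLevel L S) \ S).Nonempty :=
  Nat.findGreatest_spec (P := fun m => (consistentCore L S m \ S).Nonempty) (Nat.zero_le _)
    (consistentCore_zero_diff_nonempty S)

noncomputable def generate [Infinite U] (S : Finset U) : U :=
  (freshLevel_spec L S).some

variable {L}

theorem generate_mem_diff [Infinite U] {S : Finset U} {i : ℕ} (hS : ↑S ⊆ L i)
    (hi : i < S.card) (hbound : coreBound L (i + 1) < S.card) :
    generate L S ∈ L i \ ↑S := by
  have hfresh : (consistentCore L S (i + 1) \ S).Nonempty :=
    ((consistentCore_infinite (by rwa [Set.ncard_coe_finset])).sdiff S.finite_toSet).nonempty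
  have hlevel : i + 1 ≤ freshLevel L S := Nat.le_findGreatest hi hfresh
  obtain ⟨hcore, hnew⟩ := (freshLevel_spec L S).some_mem
  exact ⟨consistentCore_subset hlevel hS hcore, hnew⟩

theorem seen_eq_coe_toFinset_inputList (x : ℕ → U) (t : ℕ) :
    seen x t = ↑(inputList x t).toFinset := by
  ext a
  simp [seen, inputList, Fin.exists_iff]

end

theorem nonuniform_generation_for_countable_collections_general
    (U : Type) [Infinite U]
    (L : ℕ → Set U) :
    ∃ A : List U → U, ∀ i : ℕ, ∃ tstar : ℕ,
      ∀ x : ℕ → U, IsEnumerationOf (L i) x →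
        ∀ t : ℕ, tstar ≤ (seen x t).ncard →
          A (inputList x t) ∈ L i \ seen x t := by
  classical
  refine ⟨fun l => generate L l.toFinset,
    fun i => ⟨max (i + 1) (coreBound L (i + 1) + 1), fun x hx t ht => ?_⟩⟩
  have hS : seen x t ⊆ L i := by
    rintro _ ⟨k, -, rfl⟩
    exact hx.1 k
  rw [seen_eq_coe_toFinset_inputList, Set.ncard_coe_finset] at ht
  rw [seen_eq_coe_toFinset_inputList] at hS ⊢
  exact generate_mem_diff hS (by omega) (by omega)

theorem nonuniform_generation_for_countable_collections
    (U : Type) [Countable U] [Infinite U]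
    (L : ℕ → Set U) (hL : ∀ i, (L i).Infinite) :
    ∃ A : List U → U, ∀ i : ℕ, ∃ tstar : ℕ,
      ∀ x : ℕ → U, IsEnumerationOf (L i) x →
        ∀ t : ℕ, tstar ≤ (seen x t).ncard →
          A (inputList x t) ∈ L i \ seen x t :=
  nonuniform_generation_for_countable_collections_general U L
end

section
/- Let U = ℤ, let L_∞ = ℤ and, for each i ∈ ℤ, let L_i = {n ∈ ℤ : n ≥ -i}, and let C = {L_∞} ∪ {L_i : i ∈ ℤ}. Then no algorithm exhaustively generates in the limit from C. -/
/-- `Z_{<t}`: the distinct strings among `G_1(1), ..., G_{t-1}(1)`, i.e. the first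
outputs of the generators produced at steps `1 ≤ s < t`. -/
def ZltSet {U : Type} (A : List U → ℕ → U) (x : ℕ → U) (t : ℕ) : Set U :=
  (fun s => A (inputList x s) 0) '' {s | 1 ≤ s ∧ s < t}

/-- `Z_{≥t}`: the distinct strings in the sequence `G_t(1), G_t(2), ...` produced by
the generator of step `t` in generate-only mode. -/
def ZgeSet {U : Type} (A : List U → ℕ → U) (x : ℕ → U) (t : ℕ) : Set U :=
  Set.range (A (inputList x t))

/-- The algorithm `A` exhaustively generates in the limit from the collection `C`. -/
def ExhaustivelyGenerates {U : Type} (A : List U → ℕ → U) (C : Set (Set U)) : Prop :=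
  ∀ K ∈ C, ∀ x : ℕ → U, IsEnumerationOf K x →
    ∃ tstar : ℕ, ∀ t : ℕ, tstar ≤ t →
      (ZgeSet A x t \ K).Finite ∧ K ⊆ seen x t ∪ ZltSet A x t ∪ ZgeSet A x t


/-!
Against a supposed algorithm we build an enumeration of ℤ in stages. At each stage the
input so far is extended to an enumeration of some `L_i`; the algorithm must eventually
generate only finitely many strings outside `L_i`, so at some late time `t` a string
`m < -i` is neither seen, nor generated before, nor generated at `t`. We commit to the first
`t` inputs, feed `m` and continue with `L_{-m}`. The limit enumerates ℤ, and at each of the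
infinitely many times `t` the algorithm misses the string `m ∈ ℤ`.
-/

open Set

section General

variable {U : Type}

def covered (A : List U → ℕ → U) (x : ℕ → U) (t : ℕ) : Set U :=
  seen x t ∪ ZltSet A x t ∪ ZgeSet A x t

lemma seen_mono (x : ℕ → U) : Monotone (seen x) :=
  fun _ _ h => image_mono fun _ hs => lt_of_lt_of_le hs h

lemma seen_finite (x : ℕ → U) (t : ℕ) : (seen x t).Finite :=
  (finite_lt_nat t).image x

lemma ZltSet_finite (A : List U → ℕ → U) (x : ℕ → U) (t : ℕ) : (ZltSet A x t).Finite :=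
  ((finite_lt_nat t).subset fun _ hs => hs.2).image _

section Congr

variable {x y : ℕ → U} {t : ℕ}

lemma inputList_congr (h : ∀ s < t, x s = y s) : inputList x t = inputList y t :=
  congrArg List.ofFn (funext fun i => h i i.isLt)

lemma covered_congr (A : List U → ℕ → U) (h : ∀ s < t, x s = y s) :
    covered A x t = covered A y t := by
  have hseen : seen x t = seen y t := image_congr h
  have hZlt : ZltSet A x t = ZltSet A y t := image_congr fun s hs => by
    rw [inputList_congr fun r hr => h r (hr.trans hs.2)]
  rw [covered, covered, hseen, hZlt, ZgeSet, ZgeSet, inputList_congr h]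

end Congr

lemma IsEnumerationOf.exists_subset_seen {K F : Set U} {x : ℕ → U} (hx : IsEnumerationOf K x)
    (hF : F.Finite) (hFK : F ⊆ K) : ∃ N, F ⊆ seen x N := by
  choose! idx hidx using hx.2
  obtain ⟨B, hB⟩ := (hF.image idx).bddAbove
  exact ⟨B + 1, fun w hw => ⟨idx w, Nat.lt_succ_of_le (hB (mem_image_of_mem idx hw)),
    hidx w (hFK hw)⟩⟩

lemma ExhaustivelyGenerates.exists_notMem_covered {A : List U → ℕ → U} {C : Set (Set U)}
    (hA : ExhaustivelyGenerates A C) {K : Set U} (hK : K ∈ C) {x : ℕ → U}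
    (hx : IsEnumerationOf K x) (hKc : Kᶜ.Infinite) (N : ℕ) :
    ∃ t ≥ N, ∃ m ∉ K, m ∉ covered A x t := by
  obtain ⟨t₀, ht₀⟩ := hA K hK x hx
  have hfin : (covered A x (max t₀ N) \ K).Finite := by
    rw [covered, union_sdiff_distrib]
    exact (((seen_finite x _).union (ZltSet_finite A x _)).sdiff).union
      (ht₀ _ (le_max_left _ _)).1
  obtain ⟨m, hmK, hm⟩ := hKc.exists_notMem_finite hfin
  exact ⟨max t₀ N, le_max_right _ _, m, hmK, fun hmc => hm ⟨hmc, hmK⟩⟩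

lemma eq_of_agree_below {α : Type*} {f : ℕ → ℕ → α} {T : ℕ → ℕ} (hT : Monotone T)
    (hf : ∀ k, ∀ s < T (k + 1), f (k + 1) s = f k s) {k j : ℕ} (hkj : k ≤ j) {s : ℕ}
    (hs : s < T k) : f j s = f k s := by
  induction j, hkj using Nat.le_induction with
  | base => rfl
  | succ j hkj ih => rw [hf j s (hs.trans_le (hT (hkj.trans j.le_succ))), ih]

end General

def splice (e : ℕ → ℤ) (t : ℕ) (m : ℤ) (s : ℕ) : ℤ :=
  if s < t then e s else m + (s - t : ℕ)

lemma splice_of_lt {e : ℕ → ℤ} {t s : ℕ} (m : ℤ) (hs : s < t) : splice e t m s = e s :=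
  if_pos hs

lemma isEnumerationOf_splice {e : ℕ → ℤ} {t : ℕ} {m : ℤ} (h : ∀ s < t, m ≤ e s) :
    IsEnumerationOf (Ici m) (splice e t m) := by
  refine ⟨fun s => ?_, fun w hw => ⟨t + (w - m).toNat, ?_⟩⟩
  · unfold splice
    split_ifs with hs
    · exact h s hs
    · exact mem_Ici.2 (le_add_of_nonneg_right (Int.natCast_nonneg _))
  · have hw : m ≤ w := hw
    simp only [splice, if_neg (Nat.not_lt.2 (Nat.le_add_right t _)), Nat.add_sub_cancel_left]
    omega

/-- The adversary is already committed to the values of `enum` before `start`. -/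
structure AdversaryStage where
  bound : ℤ
  enum : ℕ → ℤ
  start : ℕ
  isEnumerationOf : IsEnumerationOf (Ici bound) enum

/-- The window `Icc σ.bound (-σ.bound)` widens with every move, which makes the limit
enumerate all of ℤ. -/
def Advance (A : List ℤ → ℕ → ℤ) (σ σ' : AdversaryStage) : Prop :=
  σ.start < σ'.start ∧ σ'.bound < σ.bound ∧ (∀ s < σ'.start, σ'.enum s = σ.enum s) ∧
    Icc σ.bound (-σ.bound) ⊆ seen σ.enum σ'.start ∧ σ'.bound ∉ covered A σ.enum σ'.start

lemma exists_advance {A : List ℤ → ℕ → ℤ} {C : Set (Set ℤ)} (hA : ExhaustivelyGenerates A C)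
    (hC : ∀ b : ℤ, Ici b ∈ C) (σ : AdversaryStage) : ∃ σ', Advance A σ σ' := by
  obtain ⟨N, hN⟩ := σ.isEnumerationOf.exists_subset_seen (finite_Icc _ _) Icc_subset_Ici_self
  have hcompl : (Ici σ.bound)ᶜ.Infinite := by
    rw [compl_Ici]
    exact Iio_infinite _
  obtain ⟨t, ht, m, hm, hmc⟩ :=
    hA.exists_notMem_covered (hC _) σ.isEnumerationOf hcompl (max N (σ.start + 1))
  have hmb : m < σ.bound := not_le.1 hm
  have hsplice : ∀ s < t, m ≤ σ.enum s := fun s _ =>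
    hmb.le.trans (σ.isEnumerationOf.1 s)
  exact ⟨⟨m, splice σ.enum t m, t, isEnumerationOf_splice hsplice⟩,
    (le_max_right _ _).trans ht, hmb, fun s hs => splice_of_lt m hs,
    hN.trans (seen_mono _ ((le_max_left _ _).trans ht)), hmc⟩

namespace AdversaryStage

variable {A : List ℤ → ℕ → ℤ} {σ : ℕ → AdversaryStage}

/-- Stage `s + 1` has already committed its value at `s`. -/
def limit (σ : ℕ → AdversaryStage) (s : ℕ) : ℤ := (σ (s + 1)).enum s

lemma start_strictMono (hσ : ∀ k, Advance A (σ k) (σ (k + 1))) :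
    StrictMono fun k => (σ k).start :=
  strictMono_nat_of_lt_succ fun k => (hσ k).1

lemma bound_le (hσ : ∀ k, Advance A (σ k) (σ (k + 1))) (k : ℕ) :
    (σ k).bound ≤ (σ 0).bound - k := by
  induction k with
  | zero => simp
  | succ k ih =>
    have := (hσ k).2.1
    push_cast
    omega

lemma limit_eq (hσ : ∀ k, Advance A (σ k) (σ (k + 1))) {k s : ℕ} (hs : s < (σ k).start) :
    limit σ s = (σ k).enum s := by
  have hmono := (start_strictMono hσ).monotone
  have hagree (k : ℕ) : ∀ s < (σ (k + 1)).start, (σ (k + 1)).enum s = (σ k).enum s :=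
    (hσ k).2.2.1
  have hfinal {i j : ℕ} (hij : i ≤ j) {r : ℕ} (hr : r < (σ i).start) :
      (σ j).enum r = (σ i).enum r :=
    eq_of_agree_below (f := fun k => (σ k).enum) hmono hagree hij hr
  rcases le_total (s + 1) k with hk | hk
  · exact (hfinal hk ((start_strictMono hσ).id_le (s + 1))).symm
  · exact hfinal hk hs

lemma isEnumerationOf_limit (hσ : ∀ k, Advance A (σ k) (σ (k + 1))) :
    IsEnumerationOf univ (limit σ) := by
  refine ⟨fun _ => mem_univ _, fun w _ => ?_⟩
  set k := w.natAbs + (σ 0).bound.natAbs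
  have hk := bound_le hσ k
  have hw : w ∈ Icc (σ k).bound (-(σ k).bound) := ⟨by omega, by omega⟩
  obtain ⟨s, hs, hsw⟩ := (hσ k).2.2.2.1 hw
  exact ⟨s, ((limit_eq hσ hs).trans ((hσ k).2.2.1 s hs)).trans hsw⟩

lemma bound_notMem_covered_limit (hσ : ∀ k, Advance A (σ k) (σ (k + 1))) (k : ℕ) :
    (σ (k + 1)).bound ∉ covered A (limit σ) (σ (k + 1)).start := by
  rw [covered_congr A fun s hs => (limit_eq hσ hs).trans ((hσ k).2.2.1 s hs)]
  exact (hσ k).2.2.2.2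

end AdversaryStage

theorem not_exhaustivelyGenerates_of_Ici_mem {A : List ℤ → ℕ → ℤ} {C : Set (Set ℤ)}
    (hC : ∀ b : ℤ, Ici b ∈ C) (huniv : univ ∈ C) : ¬ ExhaustivelyGenerates A C := by
  intro hA
  choose next hnext using exists_advance hA hC
  let σ₀ : AdversaryStage :=
    ⟨0, splice (fun _ => 0) 0 0, 0, isEnumerationOf_splice fun _ h => absurd h (Nat.not_lt_zero _)⟩
  let σ : ℕ → AdversaryStage := fun k => next^[k] σ₀
  have hσ : ∀ k, Advance A (σ k) (σ (k + 1)) := fun k => by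
    simp only [σ, Function.iterate_succ_apply']
    exact hnext _
  obtain ⟨t₀, ht₀⟩ := hA univ huniv _ (AdversaryStage.isEnumerationOf_limit hσ)
  have hlate : t₀ ≤ (σ (t₀ + 1)).start :=
    (Nat.le_succ t₀).trans ((AdversaryStage.start_strictMono hσ).id_le _)
  exact AdversaryStage.bound_notMem_covered_limit hσ t₀ ((ht₀ _ hlate).2 (mem_univ _))

theorem exhaustive_generation_lower_bound :
    ¬ ∃ A : List ℤ → ℕ → ℤ,
      ExhaustivelyGenerates A
        (insert (Set.univ : Set ℤ) (Set.range fun i : ℤ => {n : ℤ | -i ≤ n})) := by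
  rintro ⟨A, hA⟩
  refine not_exhaustivelyGenerates_of_Ici_mem (fun b => ?_) (mem_insert _ _) hA
  exact mem_insert_of_mem _ ⟨-b, by ext n; simp⟩
end

section
/- Let U = ℤ, let L_∞ = ℤ and, for each i ∈ ℤ, let L_i = ℤ \ {i}, and let C = {L_∞} ∪ {L_i : i ∈ ℤ}. Let w : ℕ → ℤ be the fixed sequence 0, -1, 1, -2, 2, -3, 3, -4, 4, ... and consider the input-oblivious algorithm whose generator at time t is G_t(k) = w(t + k - 1) (so it outputs w(t) at step t, and in generate-only mode from time t it enumerates the tail of w starting at position t). This algorithm exhaustively generates in the limit from C. -/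
/-- The sequence 0, -1, 1, -2, 2, -3, 3, -4, 4, ... (0-indexed). -/
def zigzag (n : ℕ) : ℤ := if n % 2 = 1 then -(((n : ℤ) + 1) / 2) else (n : ℤ) / 2

/-- The collection C = {ℤ} ∪ {ℤ \ {i} : i ∈ ℤ}. -/
def Ccomp : Set (Set ℤ) :=
  insert (Set.univ : Set ℤ) (Set.range fun i : ℤ => ({i}ᶜ : Set ℤ))

/-!
Every language in `Ccomp` is cofinite, so no generator can hallucinate more than finitely
many strings. For completeness, note that the generator at time `s ≥ 1` first outputs
`w (s - 1)`, so the first outputs before time `t` together with the tail of `w` from position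
`t - 1` make up the whole range of `w`, which is `ℤ`.
-/

section TailAlgorithm

variable {U : Type} (f : ℕ → U)

theorem range_subset_ZltSet_union_ZgeSet_tail (x : ℕ → U) (t : ℕ) :
    Set.range f ⊆
      ZltSet (fun l k => f (l.length - 1 + k)) x t ∪
        ZgeSet (fun l k => f (l.length - 1 + k)) x t := by
  rintro _ ⟨n, rfl⟩
  by_cases hn : n + 1 < t
  · exact Or.inl ⟨n + 1, ⟨Nat.le_add_left 1 n, hn⟩, by simp [inputList]⟩
  · refine Or.inr ⟨n - (t - 1), ?_⟩
    simp only [inputList, List.length_ofFn]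
    congr 1
    omega

theorem exhaustivelyGenerates_tail_of_surjective (hf : Function.Surjective f) {C : Set (Set U)}
    (hC : ∀ K ∈ C, Kᶜ.Finite) :
    ExhaustivelyGenerates (fun l k => f (l.length - 1 + k)) C := by
  intro K hK x _
  refine ⟨0, fun t _ => ⟨(hC K hK).subset fun _ hz => hz.2, fun y _ => ?_⟩⟩
  rw [Set.union_assoc]
  exact Or.inr (range_subset_ZltSet_union_ZgeSet_tail f x t (hf y))

end TailAlgorithm

theorem zigzag_surjective : Function.Surjective zigzag := by
  intro y
  rcases le_or_gt 0 y with h | h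
  · refine ⟨2 * y.toNat, ?_⟩
    unfold zigzag
    split <;> omega
  · refine ⟨2 * (-y).toNat - 1, ?_⟩
    unfold zigzag
    split <;> omega

theorem compl_finite_of_mem_Ccomp {K : Set ℤ} (hK : K ∈ Ccomp) : Kᶜ.Finite := by
  rcases hK with rfl | ⟨i, rfl⟩ <;> simp

theorem zigzag_exhaustively_generates :
    ExhaustivelyGenerates
      (fun (l : List ℤ) (k : ℕ) => zigzag (l.length - 1 + k)) Ccomp :=
  exhaustivelyGenerates_tail_of_surjective zigzag zigzag_surjective
    fun _ => compl_finite_of_mem_Ccomp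
end

section
/- Let U = ℤ, let L_∞ = ℤ and, for each i ∈ ℤ, let L_i = ℤ \ {i}, and let C = {L_∞} ∪ {L_i : i ∈ ℤ}. Then no algorithm generates with breadth in the limit from C. -/
/-- The algorithm `A` generates with breadth in the limit from the collection `C`. -/
def GeneratesWithBreadth {U : Type} (A : List U → ℕ → U) (C : Set (Set U)) : Prop :=
  ∀ K ∈ C, ∀ x : ℕ → U, IsEnumerationOf K x →
    ∃ tstar : ℕ, ∀ t : ℕ, tstar ≤ t → ZgeSet A x t = K

section

variable {U : Type}

lemma Stream'.mem_of_mem_take {s : Stream' U} {n : ℕ} {a : U} (h : a ∈ s.take n) :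
    a ∈ s := by
  obtain ⟨i, hi, rfl⟩ := List.getElem_of_mem h
  exact ⟨i, Stream'.take_get _ _ _ hi⟩

lemma Stream'.get_mem_take (s : Stream' U) {n t : ℕ} (h : t < n) :
    s.get t ∈ s.take n := by
  rw [← Stream'.take_get (a := s) (h := by simpa using h)]
  exact List.getElem_mem _

lemma inputList_eq_take (x : Stream' U) (t : ℕ) : inputList x t = x.take t :=
  List.ext_getElem (by simp [inputList]) fun _ _ _ => by simp [inputList, Stream'.get]

lemma ZgeSet_eq_range_take (A : List U → ℕ → U) (x : Stream' U) (t : ℕ) :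
    ZgeSet A x t = Set.range (A (x.take t)) :=
  congrArg (fun l => Set.range (A l)) (inputList_eq_take x t)

lemma Set.Countable.exists_isEnumerationOf {K : Set U} (hc : K.Countable)
    (hne : K.Nonempty) : ∃ x, IsEnumerationOf K x := by
  obtain ⟨x, rfl⟩ := hc.exists_eq_range hne
  exact ⟨x, Set.mem_range_self, fun _ => id⟩

lemma IsEnumerationOf.appendStream {K : Set U} {e : Stream' U}
    (he : IsEnumerationOf K e) {p : List U} (hp : ∀ a ∈ p, a ∈ K) :
    IsEnumerationOf K (p ++ₛ e) := by
  refine ⟨fun t => ?_, fun w hw => ?_⟩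
  · show (p ++ₛ e).get t ∈ K
    rcases lt_or_ge t p.length with ht | ht
    · rw [Stream'.get_append_left _ _ _ ht]
      exact hp _ (List.getElem_mem ht)
    · obtain ⟨n, rfl⟩ := Nat.exists_eq_add_of_le ht
      rw [Stream'.get_append_right]
      exact he.1 n
  · obtain ⟨n, rfl⟩ := he.2 w hw
    exact ⟨p.length + n, Stream'.get_append_right n p e⟩

lemma exists_take_eq_of_prefix_chain {P : ℕ → List U}
    (hP : ∀ n, P n <+: P (n + 1)) (hlen : ∀ n, n ≤ (P n).length) :
    ∃ x : Stream' U, ∀ n, x.take (P n).length = P n := by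
  have hchain : ∀ {m n}, m ≤ n → P m <+: P n :=
    fun hmn => Nat.rel_of_forall_rel_succ_of_le (· <+: ·) hP hmn
  let x : Stream' U := fun t => (P (t + 1))[t]'(hlen (t + 1))
  refine ⟨x, fun n => List.ext_getElem (by simp) fun t _ htn => ?_⟩
  rw [Stream'.take_get]
  change (P (t + 1))[t]'(hlen (t + 1)) = _
  rcases le_total (t + 1) n with h | h
  · exact (hchain h).getElem _
  · exact ((hchain h).getElem htn).symm

lemma GeneratesWithBreadth.exists_extension {A : List U → ℕ → U} {C : Set (Set U)}
    (hA : GeneratesWithBreadth A C) {K : Set U} (hK : K ∈ C) {e : Stream' U}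
    (he : IsEnumerationOf K e) {p : List U} (hp : ∀ a ∈ p, a ∈ K) :
    ∃ q, p <+: q ∧ (∀ a ∈ q, a ∈ K) ∧ Set.range (A q) = K := by
  obtain ⟨tstar, htstar⟩ := hA K hK _ (he.appendStream hp)
  refine ⟨p ++ e.take tstar, List.prefix_append _ _, ?_, ?_⟩
  · simp only [List.mem_append]
    rintro a (ha | ha)
    · exact hp a ha
    · obtain ⟨t, rfl⟩ := Stream'.mem_of_mem_take ha
      exact he.1 t
  · have := htstar (p.length + tstar) (Nat.le_add_left _ _)
    rwa [ZgeSet_eq_range_take, ← Stream'.append_take] at this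

lemma exists_isEnumerationOf_frequently_take {K : Set U} {e : Stream' U}
    (he : IsEnumerationOf K e) {bad : List U → Prop}
    (hext : ∀ p : List U, (∀ a ∈ p, a ∈ K) → ∃ q, p <+: q ∧ (∀ a ∈ q, a ∈ K) ∧ bad q) :
    ∃ x : Stream' U, IsEnumerationOf K x ∧ ∃ᶠ t in Filter.atTop, bad (x.take t) := by
  have hstep : ∀ (p : {p : List U // ∀ a ∈ p, a ∈ K}) (n : ℕ),
      ∃ q : {q : List U // ∀ a ∈ q, a ∈ K}, p.1 ++ [e n] <+: q.1 ∧ bad q.1 := by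
    rintro ⟨p, hp⟩ n
    obtain ⟨q, hpq, hqK, hq⟩ := hext (p ++ [e n]) fun a ha =>
      (List.mem_append.1 ha).elim (hp a) fun h => List.eq_of_mem_singleton h ▸ he.1 n
    exact ⟨⟨q, hqK⟩, hpq, hq⟩
  choose step hstep hbad using hstep
  -- Stage `n + 1` extends stage `n` by `e n` and then to a bad list, so the limit is an
  -- enumeration of `K` with infinitely many bad prefixes.
  let P : ℕ → {p : List U // ∀ a ∈ p, a ∈ K} :=
    fun n => Nat.rec ⟨[], fun _ h => absurd h List.not_mem_nil⟩ (fun n p => step p n) n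
  have hP : ∀ n, (P n).1 ++ [e n] <+: (P (n + 1)).1 := fun n => hstep (P n) n
  have hlen : ∀ n, n ≤ (P n).1.length := by
    intro n
    induction n with
    | zero => exact Nat.zero_le _
    | succ n ih => exact (Nat.succ_le_succ ih).trans (by simpa using (hP n).length_le)
  obtain ⟨x, hx⟩ := exists_take_eq_of_prefix_chain (P := fun n => (P n).1)
    (fun n => (List.prefix_append _ _).trans (hP n)) hlen
  refine ⟨x, ⟨fun t => (P (t + 1)).2 _ ?_, fun w hw => ?_⟩, ?_⟩
  · show x.get t ∈ _
    rw [← hx (t + 1)]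
    exact x.get_mem_take (hlen (t + 1))
  · obtain ⟨n, rfl⟩ := he.2 w hw
    have hn : e n ∈ x.take (P (n + 1)).1.length := by
      rw [hx (n + 1)]
      exact (hP n).subset (List.mem_append_right _ (List.mem_singleton_self _))
    obtain ⟨t, ht⟩ := Stream'.mem_of_mem_take hn
    exact ⟨t, ht.symm⟩
  · refine Filter.frequently_atTop.2 fun T => ⟨_, (Nat.le_succ T).trans (hlen (T + 1)), ?_⟩
    rw [hx (T + 1)]
    exact hbad (P T) T

theorem not_generatesWithBreadth_of_forall_finite_exists_ssubset
    (A : List U → ℕ → U) {C : Set (Set U)} {K : Set U} (hK : K ∈ C) {e : Stream' U}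
    (he : IsEnumerationOf K e)
    (hsub : ∀ s : Set U, s.Finite → s ⊆ K → ∃ L ∈ C, s ⊆ L ∧ L ⊂ K ∧ ∃ x, IsEnumerationOf L x) :
    ¬ GeneratesWithBreadth A C := by
  intro hA
  obtain ⟨x, hx, hbad⟩ := exists_isEnumerationOf_frequently_take he
    (bad := fun q => Set.range (A q) ≠ K) fun p hp => by
      obtain ⟨L, hL, hpL, hLK, y, hy⟩ := hsub _ p.finite_toSet hp
      obtain ⟨q, hpq, hqL, hq⟩ := hA.exists_extension hL hy hpL
      exact ⟨q, hpq, fun a ha => hLK.subset (hqL a ha), hq ▸ hLK.ne⟩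
  obtain ⟨tstar, htstar⟩ := hA K hK x hx
  obtain ⟨t, hbad_t, hgood_t⟩ :=
    (hbad.and_eventually (Filter.eventually_atTop.2 ⟨tstar, htstar⟩)).exists
  exact hbad_t (by rwa [ZgeSet_eq_range_take] at hgood_t)

end

theorem no_generation_with_breadth_for_complement_collection :
    ¬ ∃ A : List ℤ → ℕ → ℤ, GeneratesWithBreadth A Ccomp := by
  rintro ⟨A, hA⟩
  obtain ⟨e, he⟩ := (Set.univ : Set ℤ).to_countable.exists_isEnumerationOf Set.univ_nonempty
  refine not_generatesWithBreadth_of_forall_finite_exists_ssubset A (Set.mem_insert _ _) he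
    (fun s hs _ => ?_) hA
  obtain ⟨i, hi⟩ := hs.exists_notMem
  exact ⟨{i}ᶜ, Set.mem_insert_of_mem _ ⟨i, rfl⟩, Set.subset_compl_singleton_iff.2 hi,
    Set.ssubset_univ_iff.2 (by simp),
    Set.to_countable _ |>.exists_isEnumerationOf ⟨i + 1, by simp⟩⟩
end

section
/- If a countable collection C = {L_1, L_2, ...} of infinite languages over U can be exhaustively generated in the limit by some algorithm, then C satisfies Weak Angluin's Condition with Existence. -/
/-- Weak Angluin's Condition with Existence: every L ∈ C has a finite tell-tale
T ⊆ L such that every L' ∈ C with T ⊆ L' and L' ⊊ L satisfies |L \ L'| < ∞. -/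
def WeakAngluinExistence {U : Type} (C : Set (Set U)) : Prop :=
  ∀ L ∈ C, ∃ T : Set U, T.Finite ∧ T ⊆ L ∧
    ∀ L' ∈ C, T ⊆ L' → L' ⊂ L → (L \ L').Finite

/-!
Suppose `L ∈ C` has no tell-tale, so every finite `T ⊆ L` lies in some `L' ∈ C` with `L' ⊆ L`
and `L \ L'` infinite. Feed the algorithm an enumeration of such an `L'` that starts with the
current input prefix: from some time on it generates only finitely many strings outside `L'`,
so after a longer prefix, still inside `L`, some string of `L \ L'` is neither seen nor generated.
Everything the algorithm has produced by time `t` depends only on the first `t` inputs, so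
iterating this step, while interleaving an enumeration of `L`, builds an enumeration of `L`
on which the algorithm misses a string of `L` at infinitely many times.
-/

variable {U : Type}

section InputList

variable (x : ℕ → U)

@[simp]
lemma inputList_length (t : ℕ) : (inputList x t).length = t := by
  simp [inputList]

@[simp]
lemma inputList_getElem (t i : ℕ) (hi : i < (inputList x t).length) :
    (inputList x t)[i] = x i := by
  simp [inputList]

lemma mem_inputList {t : ℕ} {u : U} : u ∈ inputList x t ↔ ∃ i < t, x i = u := by
  simp [inputList, List.mem_ofFn, Fin.exists_iff]

lemma inputList_take {s t : ℕ} (h : s ≤ t) : (inputList x t).take s = inputList x s :=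
  List.ext_getElem (by simp [h]) fun i _ _ => by simp

lemma inputList_isPrefix {s t : ℕ} (h : s ≤ t) : inputList x s <+: inputList x t :=
  inputList_take x h ▸ List.take_prefix s _

end InputList

/-- The strings `S_t ∪ Z_{<t} ∪ Z_{≥t}` available to the algorithm after reading the prefix `q`
of length `t`. -/
def coverage (A : List U → ℕ → U) (q : List U) : Set U :=
  {u | u ∈ q} ∪ (fun s => A (q.take s) 0) '' Set.Ico 1 q.length ∪ Set.range (A q)

lemma seen_union_ZltSet_union_ZgeSet (A : List U → ℕ → U) (x : ℕ → U) (t : ℕ) :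
    seen x t ∪ ZltSet A x t ∪ ZgeSet A x t = coverage A (inputList x t) := by
  have hseen : seen x t = {u | u ∈ inputList x t} := by
    ext u
    simp [seen, mem_inputList]
  have hZlt : ZltSet A x t =
      (fun s => A ((inputList x t).take s) 0) '' Set.Ico 1 (inputList x t).length := by
    rw [inputList_length]
    exact Set.image_congr fun s hs => by rw [inputList_take x hs.2.le]
  rw [hseen, hZlt]
  rfl

lemma finite_coverage_diff {A : List U → ℕ → U} {q : List U} {K : Set U}
    (h : (Set.range (A q) \ K).Finite) : (coverage A q \ K).Finite := by
  simp only [coverage, Set.union_sdiff_distrib]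
  exact ((q.finite_toSet.sdiff).union ((Set.finite_Ico _ _).image _).sdiff).union h

lemma exists_isEnumerationOf_inputList_eq [Countable U] {K : Set U} (hK : K.Nonempty)
    {p : List U} (hp : ∀ u ∈ p, u ∈ K) : ∃ y, IsEnumerationOf K y ∧ inputList y p.length = p := by
  obtain ⟨f, rfl⟩ := K.to_countable.exists_eq_range hK
  refine ⟨fun i => if hi : i < p.length then p[i] else f (i - p.length), ⟨fun i => ?_, ?_⟩, ?_⟩
  · dsimp only
    split_ifs with hi
    · exact hp _ (p.getElem_mem hi)
    · exact Set.mem_range_self _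
  · rintro _ ⟨s, rfl⟩
    exact ⟨p.length + s, by simp⟩
  · exact List.ext_getElem (by simp) fun i _ hi => by simp [hi]

lemma exists_inputList_eq_of_isPrefix_succ {P : ℕ → List U} (hP : ∀ n, P n <+: P (n + 1))
    (hlen : ∀ n, n < (P (n + 1)).length) : ∃ x : ℕ → U, ∀ n, inputList x (P n).length = P n := by
  have hmono : ∀ {m n}, m ≤ n → P m <+: P n := fun hmn =>
    Nat.le_induction (List.prefix_refl _) (fun n _ ih => ih.trans (hP n)) _ hmn
  refine ⟨fun i => (P (i + 1))[i]'(hlen i), fun n => List.ext_getElem (by simp) fun i _ hi => ?_⟩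
  simp only [inputList_getElem]
  rcases le_total n (i + 1) with h | h
  · exact ((hmono h).getElem hi).symm
  · exact (hmono h).getElem (hlen i)

def NoFiniteTellTale (C : Set (Set U)) (L : Set U) : Prop :=
  ∀ T : Set U, T.Finite → T ⊆ L → ∃ L' ∈ C, T ⊆ L' ∧ L' ⊆ L ∧ (L \ L').Infinite

section Adversary

variable [Countable U] {A : List U → ℕ → U} {C : Set (Set U)} {L : Set U}

lemma exists_prefix_not_subset_coverage (hA : ExhaustivelyGenerates A C)
    (hL : NoFiniteTellTale C L)
    {p : List U} (hp : ∀ v ∈ p, v ∈ L) {u : U}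
    (hu : u ∈ L) : ∃ q, p ++ [u] <+: q ∧ (∀ v ∈ q, v ∈ L) ∧ ¬ L ⊆ coverage A q := by
  have hpu : ∀ v ∈ p ++ [u], v ∈ L := by simpa [or_imp, forall_and] using ⟨hp, hu⟩
  obtain ⟨L', hL'C, hpL', hL'L, hinf⟩ := hL {v | v ∈ p ++ [u]} (List.finite_toSet _) hpu
  obtain ⟨y, hy, hyp⟩ := exists_isEnumerationOf_inputList_eq ⟨u, hpL' (by simp)⟩ hpL'
  obtain ⟨tstar, htstar⟩ := hA L' hL'C y hy
  set t := max tstar (p ++ [u]).length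
  obtain ⟨w, ⟨hwL, hwL'⟩, hw⟩ :=
    (hinf.sdiff (finite_coverage_diff (htstar t (le_max_left _ _)).1)).nonempty
  refine ⟨inputList y t, hyp ▸ inputList_isPrefix y (le_max_right _ _), fun v hv => ?_,
    fun hcov => hw ⟨hcov hwL, hwL'⟩⟩
  obtain ⟨i, -, rfl⟩ := (mem_inputList y).1 hv
  exact hL'L (hy.1 i)

lemma exists_isEnumerationOf_frequently_not_subset_coverage (hA : ExhaustivelyGenerates A C)
    (hL : NoFiniteTellTale C L) :
    ∃ x, IsEnumerationOf L x ∧ ∀ N, ∃ t ≥ N, ¬ L ⊆ coverage A (inputList x t) := by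
  obtain ⟨L', -, -, -, hinf⟩ := hL ∅ Set.finite_empty (Set.empty_subset _)
  obtain ⟨e, he, -⟩ :=
    exists_isEnumerationOf_inputList_eq (hinf.nonempty.mono Set.sdiff_subset) (p := []) (by simp)
  choose Q hQpre hQmem hQmiss using fun (p : {p : List U // ∀ v ∈ p, v ∈ L}) (u : L) =>
    exists_prefix_not_subset_coverage hA hL p.2 u.2
  let P : ℕ → {p : List U // ∀ v ∈ p, v ∈ L} :=
    fun n => Nat.rec ⟨[], by simp⟩ (fun n p => ⟨Q p ⟨e n, he.1 n⟩, hQmem _ _⟩) n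
  have hstep : ∀ n, (P n).1 ++ [e n] <+: (P (n + 1)).1 := fun n => hQpre (P n) ⟨e n, he.1 n⟩
  have hgrow : ∀ n, (P n).1.length < (P (n + 1)).1.length := fun n => by
    have := (hstep n).length_le
    simp only [List.length_append, List.length_singleton] at this
    omega
  have hlen : ∀ n, n < (P (n + 1)).1.length := by
    intro n
    induction n with
    | zero => exact (Nat.zero_le _).trans_lt (hgrow 0)
    | succ n ih => exact (Nat.succ_le_of_lt ih).trans_lt (hgrow (n + 1))
  obtain ⟨x, hx⟩ := exists_inputList_eq_of_isPrefix_succ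
    (fun n => (List.prefix_append _ _).trans (hstep n)) hlen
  have hxP : ∀ n i (hi : i < (P n).1.length), x i = (P n).1[i] := fun n i hi =>
    (inputList_getElem x _ i (by simpa using hi)).symm.trans (List.getElem_of_eq (hx n) _)
  refine ⟨x, ⟨fun i => ?_, fun w hw => ?_⟩, fun N => ⟨_, (hlen N).le, ?_⟩⟩
  · exact hxP (i + 1) i (hlen i) ▸ (P (i + 1)).2 _ (List.getElem_mem _)
  · obtain ⟨n, rfl⟩ := he.2 w hw
    have hn : (P n).1.length < ((P n).1 ++ [e n]).length := by simp
    exact ⟨_, by rw [hxP (n + 1) _ (hn.trans_le (hstep n).length_le), ← (hstep n).getElem hn]; simp⟩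
  · rw [hx (N + 1)]
    exact hQmiss _ _

end Adversary

theorem exhaustive_generation_necessary_condition_general
    (U : Type) [Countable U]
    (L : ℕ → Set U)
    (h : ∃ A : List U → ℕ → U, ExhaustivelyGenerates A (Set.range L)) :
    WeakAngluinExistence (Set.range L) := by
  obtain ⟨A, hA⟩ := h
  intro L₀ hL₀
  by_contra hno
  have hbad : NoFiniteTellTale (Set.range L) L₀ := by
    push Not at hno
    intro T hT hTL
    obtain ⟨L', hL', hTL', hL'L₀, hinf⟩ := hno T hT hTL
    exact ⟨L', hL', hTL', hL'L₀.subset, hinf⟩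
  obtain ⟨x, hx, hmiss⟩ := exists_isEnumerationOf_frequently_not_subset_coverage hA hbad
  obtain ⟨tstar, htstar⟩ := hA L₀ hL₀ x hx
  obtain ⟨t, ht, hnot⟩ := hmiss tstar
  exact hnot (seen_union_ZltSet_union_ZgeSet A x t ▸ (htstar t ht).2)

theorem exhaustive_generation_necessary_condition
    (U : Type) [Countable U] [Infinite U]
    (L : ℕ → Set U) (hL : ∀ i, (L i).Infinite)
    (h : ∃ A : List U → ℕ → U, ExhaustivelyGenerates A (Set.range L)) :
    WeakAngluinExistence (Set.range L) :=
  exhaustive_generation_necessary_condition_general U L h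
end

section
/- If a countable collection C = {L_1, L_2, ...} of infinite languages over U satisfies Weak Angluin's Condition with Existence, then there exists an algorithm that exhaustively generates in the limit from C. -/
/-!
The generator guesses the least index `i` such that the tell-tale `T i` has been seen and
everything seen lies in `L i`, and enumerates `L i`. On an enumeration of `K = L j`, every index
below the least `i*` with `T i* ⊆ K ⊆ L i*` is eventually refuted (either `T i ⊄ K`, so it is
never fully seen, or some element of `K \ L i` shows up), while `i*` itself is eventually
consistent since `T i*` is finite. So the guess stabilises at `i*`, whose language covers `K`,
and the tell-tale condition makes `L i* \ K` finite.
-/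

open Filter

section Enumeration

variable {U : Type} {K : Set U} {x : ℕ → U}

theorem setOf_mem_inputList (x : ℕ → U) (t : ℕ) : {a | a ∈ inputList x t} = seen x t := by
  ext a
  simp only [inputList, List.mem_ofFn, seen, Set.mem_ofPred_eq, Set.mem_image]
  exact ⟨fun ⟨i, hi⟩ => ⟨i, i.isLt, hi⟩, fun ⟨i, hi, hxi⟩ => ⟨⟨i, hi⟩, hxi⟩⟩

theorem IsEnumerationOf.seen_subset (hx : IsEnumerationOf K x) (t : ℕ) : seen x t ⊆ K := by
  rintro _ ⟨s, -, rfl⟩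
  exact hx.1 s

theorem IsEnumerationOf.eventually_mem_seen (hx : IsEnumerationOf K x) {w : U} (hw : w ∈ K) :
    ∀ᶠ t in atTop, w ∈ seen x t := by
  obtain ⟨s, rfl⟩ := hx.2 w hw
  exact eventually_atTop.2 ⟨s + 1, fun t ht => ⟨s, ht, rfl⟩⟩

theorem IsEnumerationOf.eventually_subset_seen (hx : IsEnumerationOf K x) {F : Set U}
    (hF : F.Finite) (hFK : F ⊆ K) : ∀ᶠ t in atTop, F ⊆ seen x t :=
  (eventually_all_finite hF).2 fun _ hw => hx.eventually_mem_seen (hFK hw)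

end Enumeration

section TellTaleGenerator

variable {U : Type} (T L : ℕ → Set U)

def TellTaleConsistent (s : Set U) (i : ℕ) : Prop :=
  T i ⊆ s ∧ s ⊆ L i

open Classical in
noncomputable def firstConsistent (s : Set U) : ℕ :=
  if h : ∃ i, TellTaleConsistent T L s i then Nat.find h else 0

noncomputable def tellTaleGenerator (e : ℕ → ℕ → U) : List U → ℕ → U :=
  fun l => e (firstConsistent T L {a | a ∈ l})

variable {T L}

theorem firstConsistent_eq {s : Set U} {i : ℕ} (hi : TellTaleConsistent T L s i)
    (hlt : ∀ m < i, ¬ TellTaleConsistent T L s m) : firstConsistent T L s = i := by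
  classical
  have hex : ∃ i, TellTaleConsistent T L s i := ⟨i, hi⟩
  rw [firstConsistent, dif_pos hex, Nat.find_eq_iff]
  exact ⟨hi, hlt⟩

variable {K : Set U} {x : ℕ → U}

theorem IsEnumerationOf.eventually_not_consistent (hx : IsEnumerationOf K x) {i : ℕ}
    (hi : ¬ (T i ⊆ K ∧ K ⊆ L i)) : ∀ᶠ t in atTop, ¬ TellTaleConsistent T L (seen x t) i := by
  by_cases hTK : T i ⊆ K
  · obtain ⟨w, hwK, hwL⟩ := Set.not_subset.1 fun hKL => hi ⟨hTK, hKL⟩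
    exact (hx.eventually_mem_seen hwK).mono fun t hw hcons => hwL (hcons.2 hw)
  · exact Eventually.of_forall fun t hcons => hTK (hcons.1.trans (hx.seen_subset t))

theorem IsEnumerationOf.exists_eventually_firstConsistent_eq (hx : IsEnumerationOf K x)
    (hT : ∀ i, (T i).Finite) (hex : ∃ i, T i ⊆ K ∧ K ⊆ L i) :
    ∃ i, T i ⊆ K ∧ K ⊆ L i ∧ ∀ᶠ t in atTop, firstConsistent T L (seen x t) = i := by
  classical
  obtain ⟨hTK, hKL⟩ := Nat.find_spec hex
  refine ⟨Nat.find hex, hTK, hKL, ?_⟩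
  have hcons : ∀ᶠ t in atTop, TellTaleConsistent T L (seen x t) (Nat.find hex) :=
    (hx.eventually_subset_seen (hT _) hTK).mono fun t hTs => ⟨hTs, (hx.seen_subset t).trans hKL⟩
  have hrefuted : ∀ᶠ t in atTop, ∀ m < Nat.find hex, ¬ TellTaleConsistent T L (seen x t) m :=
    (eventually_all_finite (Set.finite_lt_nat _)).2 fun m hm =>
      hx.eventually_not_consistent (Nat.find_min hex hm)
  filter_upwards [hcons, hrefuted] with t using firstConsistent_eq

end TellTaleGenerator

theorem exhaustive_generation_sufficient_condition_general
    (U : Type) [Countable U]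
    (L : ℕ → Set U) (hL : ∀ i, (L i).Infinite)
    (h : WeakAngluinExistence (Set.range L)) :
    ∃ A : List U → ℕ → U, ExhaustivelyGenerates A (Set.range L) := by
  choose T hTfin hTsub hTmin using fun i => h (L i) ⟨i, rfl⟩
  choose e he using fun i => (Set.to_countable (L i)).exists_eq_range (hL i).nonempty
  refine ⟨tellTaleGenerator T L e, ?_⟩
  rintro K ⟨j, rfl⟩ x hx
  obtain ⟨i, hTK, hKL, hguess⟩ :=
    hx.exists_eventually_firstConsistent_eq hTfin ⟨j, hTsub j, subset_rfl⟩
  have hdiff : (L i \ L j).Finite := by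
    rcases hKL.eq_or_ssubset with heq | hssub
    · simp [heq]
    · exact hTmin i (L j) ⟨j, rfl⟩ hTK hssub
  obtain ⟨t₀, ht₀⟩ := eventually_atTop.1 hguess
  refine ⟨t₀, fun t ht => ?_⟩
  have hZ : ZgeSet (tellTaleGenerator T L e) x t = L i := by
    rw [ZgeSet, tellTaleGenerator, setOf_mem_inputList, ht₀ t ht, he]
  rw [hZ]
  exact ⟨hdiff, fun w hw => Or.inr (hKL hw)⟩

theorem exhaustive_generation_sufficient_condition
    (U : Type) [Countable U] [Infinite U]
    (L : ℕ → Set U) (hL : ∀ i, (L i).Infinite)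
    (h : WeakAngluinExistence (Set.range L)) :
    ∃ A : List U → ℕ → U, ExhaustivelyGenerates A (Set.range L) :=
  exhaustive_generation_sufficient_condition_general U L hL h
end

section
/- For every countable collection C of infinite languages over U, the GNF dimension of C is equal to the closure dimension of C (in particular, one is finite if and only if the other is, and then they are equal). -/
/-!
STATEMENT 13: For every countable collection C of infinite languages over U, the GNF
dimension of C equals the closure dimension of C (as values in ℕ∞, so in particular
one is finite iff the other is, and then they are equal).

In the no-feedback interaction model a completed round is a pair (x_t, z_t); a
generator strategy maps (history, current input) to the output z_t, and an adversary
strategy maps the history of completed rounds to the next input x_t.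
-/

/-- The history of the first `t` completed rounds of the interaction between the
adversary strategy `Adv` and generator strategy `Gen`. -/
def nfRun {U : Type} (Adv : List (U × U) → U) (Gen : List (U × U) → U → U) :
    ℕ → List (U × U)
  | 0 => []
  | t + 1 =>
      let h := nfRun Adv Gen t
      h ++ [(Adv h, Gen h (Adv h))]

/-- The adversary's input `x` at round `t` (0-indexed) of the transcript T(Adv, Gen). -/
def nfX {U : Type} (Adv : List (U × U) → U) (Gen : List (U × U) → U → U) (t : ℕ) : U :=
  Adv (nfRun Adv Gen t)

/-- The generator's output `z` at round `t` of the transcript T(Adv, Gen). -/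
def nfZ {U : Type} (Adv : List (U × U) → U) (Gen : List (U × U) → U → U) (t : ℕ) : U :=
  Gen (nfRun Adv Gen t) (nfX Adv Gen t)

/-- `S_r`: the set of distinct inputs among the first `r` rounds. -/
def nfS {U : Type} (Adv : List (U × U) → U) (Gen : List (U × U) → U → U) (r : ℕ) :
    Set U :=
  nfX Adv Gen '' {t | t < r}

/-- The adversary strategy `Adv` is consistent with the language `K` (against `Gen`):
the inputs form an enumeration of `K`. -/
def nfConsistent {U : Type} (Adv : List (U × U) → U) (Gen : List (U × U) → U → U)
    (K : Set U) : Prop :=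
  (∀ t, nfX Adv Gen t ∈ K) ∧ ∀ w ∈ K, ∃ t, nfX Adv Gen t = w

/-- `C_r(T)`: the languages of `C` consistent with the transcript up to round `r`. -/
def nfCons {U : Type} (C : Set (Set U)) (Adv : List (U × U) → U)
    (Gen : List (U × U) → U → U) (r : ℕ) : Set (Set U) :=
  {Lang ∈ C | ∀ t < r, nfX Adv Gen t ∈ Lang}

/-- The effective intersection `E_r(T)`. -/
def nfE {U : Type} (C : Set (Set U)) (Adv : List (U × U) → U)
    (Gen : List (U × U) → U → U) (r : ℕ) : Set U :=
  ⋂₀ nfCons C Adv Gen r \ nfS Adv Gen r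

/-- The GNF dimension of `C`: the supremum of all `d ∈ ℕ` such that for every
generator strategy there are a language `K ∈ C` and an adversary strategy consistent
with `K` whose transcript has a finite round `r ≥ d` with `|S_r| ≥ d` and
`E_r(T) = ∅`. -/
noncomputable def gnfDim {U : Type} (C : Set (Set U)) : ℕ∞ :=
  sSup {e : ℕ∞ | ∃ d : ℕ, e = (d : ℕ∞) ∧
    ∀ Gen : List (U × U) → U → U,
      ∃ K ∈ C, ∃ Adv : List (U × U) → U,
        nfConsistent Adv Gen K ∧
        ∃ r : ℕ, d ≤ r ∧ d ≤ (nfS Adv Gen r).ncard ∧ nfE C Adv Gen r = ∅}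

/-- The closure dimension of `C`: the supremum of sizes of finite sets `S ⊆ U` such
that the intersection of all languages of `C` containing `S` is finite. -/
noncomputable def closureDim {U : Type} (C : Set (Set U)) : ℕ∞ :=
  sSup {e : ℕ∞ | ∃ S : Finset U, e = (S.card : ℕ∞) ∧
    (⋂₀ {Lang ∈ C | (S : Set U) ⊆ Lang}).Finite}

/-!
`E_r(T) = ∅` says precisely that the finite set `S_r` is closed for the closure operator
`S ↦ ⋂ {L ∈ C | S ⊆ L}`, so a witness for the GNF dimension is a finite closed set of size at
least `d`. Conversely, if `S` has a finite closure `F`, an adversary that first lists `F` and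
then enumerates some `K ∈ C` containing `S` reaches, after `|F|` rounds and whatever the
generator does, the closed set `S_{|F|} = F`.
-/

open Set

variable {U : Type}

def langClosure (C : Set (Set U)) (S : Set U) : Set U :=
  ⋂₀ {L ∈ C | S ⊆ L}

section LangClosure

variable {C : Set (Set U)} {S : Set U}

lemma subset_langClosure : S ⊆ langClosure C S :=
  fun _ hx => mem_sInter.2 fun _ hL => hL.2 hx

lemma langClosure_subset_of_mem {L : Set U} (hL : L ∈ C) (hSL : S ⊆ L) :
    langClosure C S ⊆ L :=
  sInter_subset_of_mem ⟨hL, hSL⟩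

lemma langClosure_langClosure : langClosure C (langClosure C S) = langClosure C S := by
  have hsame : {L ∈ C | langClosure C S ⊆ L} = {L ∈ C | S ⊆ L} := by
    ext L
    exact and_congr_right fun hL =>
      ⟨subset_langClosure.trans, langClosure_subset_of_mem hL⟩
  rw [langClosure, hsame, langClosure]

lemma exists_mem_superset_of_langClosure_finite [Infinite U]
    (h : (langClosure C S).Finite) : ∃ K ∈ C, S ⊆ K := by
  by_contra! hnone
  have hempty : {L ∈ C | S ⊆ L} = ∅ :=
    eq_empty_iff_forall_notMem.2 fun L hL => hnone L hL.1 hL.2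
  rw [langClosure, hempty, sInter_empty] at h
  exact infinite_univ h

end LangClosure

lemma exists_nat_enum_with_prefix {F K : Set U} (hF : F.Finite) (hFK : F ⊆ K)
    (hK : K.Countable) (hne : K.Nonempty) :
    ∃ x : ℕ → U, range x = K ∧ x '' Iio F.ncard = F := by
  obtain ⟨f, rfl⟩ := hK.exists_eq_range hne
  set l := hF.toFinset.toList
  have hmem : ∀ w, w ∈ l ↔ w ∈ F := by simp [l]
  have hlen : l.length = F.ncard := by
    simp [l, ncard_eq_toFinset_card _ hF]
  refine ⟨fun t => l.getD t (f (t - l.length)), ?_, ?_⟩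
  · refine Subset.antisymm ?_ fun w ⟨i, hi⟩ => ⟨i + l.length, by simp [hi]⟩
    rintro _ ⟨t, rfl⟩
    dsimp only
    rcases lt_or_ge t l.length with ht | ht
    · rw [List.getD_eq_getElem _ _ ht]
      exact hFK ((hmem _).1 (List.getElem_mem ht))
    · rw [List.getD_eq_default _ _ ht]
      exact mem_range_self _
  · ext w
    simp only [mem_image, mem_Iio, ← hlen]
    constructor
    · rintro ⟨t, ht, rfl⟩
      rw [List.getD_eq_getElem _ _ ht]
      exact (hmem _).1 (List.getElem_mem ht)
    · intro hw
      obtain ⟨t, ht, rfl⟩ := List.mem_iff_getElem.1 ((hmem w).2 hw)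
      exact ⟨t, ht, List.getD_eq_getElem _ _ ht⟩

section Transcript

variable (Gen : List (U × U) → U → U)

lemma nfRun_length (Adv : List (U × U) → U) (t : ℕ) : (nfRun Adv Gen t).length = t := by
  induction t with
  | zero => rfl
  | succ t ih => simp [nfRun, ih]

lemma nfS_finite (Adv : List (U × U) → U) (r : ℕ) : (nfS Adv Gen r).Finite :=
  (finite_Iio r).image _

lemma nfE_eq (C : Set (Set U)) (Adv : List (U × U) → U) (r : ℕ) :
    nfE C Adv Gen r = langClosure C (nfS Adv Gen r) \ nfS Adv Gen r := by
  have hcons : nfCons C Adv Gen r = {L ∈ C | nfS Adv Gen r ⊆ L} := by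
    ext L
    simp [nfCons, nfS, subset_def]
  rw [nfE, hcons, langClosure]

variable (x : ℕ → U)

lemma nfX_length_comp (t : ℕ) : nfX (fun h => x h.length) Gen t = x t := by
  simp [nfX, nfRun_length]

lemma nfS_length_comp (r : ℕ) : nfS (fun h => x h.length) Gen r = x '' Iio r := by
  simp only [nfS, nfX_length_comp]
  rfl

lemma nfConsistent_length_comp_iff {K : Set U} :
    nfConsistent (fun h => x h.length) Gen K ↔ range x = K := by
  simp only [nfConsistent, nfX_length_comp, Subset.antisymm_iff, range_subset_iff]
  rfl

end Transcript

theorem gnfDim_le_closureDim (C : Set (Set U)) : gnfDim C ≤ closureDim C := by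
  refine sSup_le ?_
  rintro _ ⟨d, rfl, hd⟩
  obtain ⟨-, -, Adv, -, r, -, hcard, hE⟩ := hd fun _ x => x
  have hfin := nfS_finite (fun _ x => x) Adv r
  rw [nfE_eq, sdiff_eq_empty] at hE
  calc (d : ℕ∞) ≤ hfin.toFinset.card := by
        rw [← ncard_eq_toFinset_card _ hfin]
        exact_mod_cast hcard
    _ ≤ closureDim C := le_sSup ⟨_, rfl, by rw [Finite.coe_toFinset]; exact hfin.subset hE⟩

theorem closureDim_le_gnfDim [Countable U] [Infinite U] (C : Set (Set U)) :
    closureDim C ≤ gnfDim C := by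
  refine sSup_le ?_
  rintro _ ⟨S, rfl, hfin : (langClosure C S).Finite⟩
  rcases S.eq_empty_or_nonempty with rfl | hS
  · simp
  obtain ⟨K, hKC, hSK⟩ := exists_mem_superset_of_langClosure_finite hfin
  obtain ⟨x, hxK, hxF⟩ := exists_nat_enum_with_prefix hfin (langClosure_subset_of_mem hKC hSK)
    K.to_countable (hS.to_set.mono hSK)
  have hcard : S.card ≤ (langClosure C S).ncard := by
    rw [← ncard_coe_finset]
    exact ncard_le_ncard subset_langClosure hfin
  refine le_sSup ⟨S.card, rfl, fun Gen => ⟨K, hKC, fun h => x h.length,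
    (nfConsistent_length_comp_iff Gen x).2 hxK, _, hcard, ?_, ?_⟩⟩
  · rwa [nfS_length_comp, hxF]
  · rw [nfE_eq, nfS_length_comp, hxF, langClosure_langClosure, sdiff_self]

theorem gnfDim_eq_closureDim_general
    (U : Type) [Countable U] [Infinite U]
    (C : Set (Set U)) :
    gnfDim C = closureDim C :=
  le_antisymm (gnfDim_le_closureDim C) (closureDim_le_gnfDim C)

theorem gnfDim_eq_closureDim
    (U : Type) [Countable U] [Infinite U]
    (C : Set (Set U)) (hC : C.Countable) (hInf : ∀ L ∈ C, L.Infinite) :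
    gnfDim C = closureDim C :=
  gnfDim_eq_closureDim_general U C
end
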